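/- For every digraph G, the directed pathwidth of G is at most the cycle rank of G: dpw(G) ≤ crank(G). -/

import Mathlib

open scoped Classical

variable {V : Type*}

/-- `b` is reachable from `a` by a (possibly empty) directed path staying inside `S`. -/
def ReachIn (E : V → V → Prop) (S : Finset V) (a b : V) : Prop :=
  Relation.ReflTransGen (fun x y => x ∈ S ∧ y ∈ S ∧ E x y) a b

/-- The induced subdigraph `G[S]` is strongly connected. -/
def StronglyConnIn (E : V → V → Prop) (S : Finset V) : Prop :=
  ∀ a ∈ S, ∀ b ∈ S, ReachIn E S a b

/-- The induced subdigraph `G[S]` contains at least one edge. -/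
def HasEdgeIn (E : V → V → Prop) (S : Finset V) : Prop :=
  ∃ a ∈ S, ∃ b ∈ S, E a b

/-- `G[S]` is acyclic: every strongly connected component of `G[S]` is trivial,
equivalently there is no edge lying on a closed walk inside `S`. -/
def AcyclicIn (E : V → V → Prop) (S : Finset V) : Prop :=
  ¬ ∃ a ∈ S, ∃ b ∈ S, E a b ∧ ReachIn E S b a

open Classical in
/-- The strongly connected component of `v` in the induced subdigraph `G[S]`. -/
noncomputable def sccOf [DecidableEq V] (E : V → V → Prop) (S : Finset V) (v : V) : Finset V :=
  S.filter (fun u => ReachIn E S v u ∧ ReachIn E S u v)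

open Classical in
/-- Fuel-based auxiliary function implementing the recursive definition of cycle rank. -/
noncomputable def crankAux [DecidableEq V] (E : V → V → Prop) : ℕ → Finset V → ℕ
  | 0, _ => 0
  | n + 1, S =>
    if AcyclicIn E S then 0
    else if StronglyConnIn E S then
      1 + sInf {m | ∃ v ∈ S, crankAux E n (S.erase v) = m}
    else
      S.sup (fun v => crankAux E n (sccOf E S v))

/-- The cycle rank of the digraph `(V, E)`. -/
noncomputable def crank [DecidableEq V] [Fintype V] (E : V → V → Prop) : ℕ :=
  crankAux E (Fintype.card V) Finset.univ


/-- `L` is a directed path decomposition of `(V, E)`: a sequence of bags covering all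
vertices, such that `W_i ∩ W_k ⊆ W_j` for `i < j < k`, and each edge `(u,v)` either has
both endpoints in a common bag, or `u` occurs in a bag strictly before a bag containing `v`. -/
def IsDirPathDecomp {V : Type*} (E : V → V → Prop) (L : List (Finset V)) : Prop :=
  (∀ v : V, ∃ W ∈ L, v ∈ W) ∧
  (∀ i j k : ℕ, i < j → j < k →
    ∀ (hi : i < L.length) (hj : j < L.length) (hk : k < L.length),
      ∀ v, v ∈ L.get ⟨i, hi⟩ → v ∈ L.get ⟨k, hk⟩ → v ∈ L.get ⟨j, hj⟩) ∧
  (∀ u v, E u v → (∃ W ∈ L, u ∈ W ∧ v ∈ W) ∨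
      ∃ (i j : ℕ) (hi : i < L.length) (hj : j < L.length),
        i < j ∧ u ∈ L.get ⟨i, hi⟩ ∧ v ∈ L.get ⟨j, hj⟩)

/-- The directed pathwidth of `(V, E)`: the minimum, over all directed path
decompositions, of (maximum bag size) − 1. -/
noncomputable def dpw {V : Type*} [Fintype V] (E : V → V → Prop) : ℕ :=
  sInf {w : ℕ | ∃ L : List (Finset V), IsDirPathDecomp E L ∧ ∀ W ∈ L, W.card ≤ w + 1}

/-!
Induction along the recursive definition of cycle rank. An acyclic graph has only singleton
strongly connected components. A vertex `v` of a strongly connected graph can be added to every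
bag of a decomposition of `G - v`, which raises the width by one. For a graph that is not
strongly connected, the decompositions of its strongly connected components are concatenated in
topological order, peeling off one source component at a time: the set of ancestors of a vertex
with the fewest ancestors.

Decompositions are encoded by assigning each vertex an interval of bag positions. The interval
axiom then holds by construction, and an edge `u → v` is served exactly when the interval of `u`
does not start after the interval of `v` ends.
-/

open Finset

variable {E : V → V → Prop}

theorem ReachIn.mono {S T : Finset V} (hST : S ⊆ T) {a b : V} (h : ReachIn E S a b) :
    ReachIn E T a b :=
  Relation.ReflTransGen.mono (fun _ _ hxy => ⟨hST hxy.1, hST hxy.2.1, hxy.2.2⟩) _ _ h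

theorem ReachIn.head {S : Finset V} {a b c : V} (ha : a ∈ S) (hb : b ∈ S) (hab : E a b)
    (h : ReachIn E S b c) : ReachIn E S a c :=
  Relation.ReflTransGen.head ⟨ha, hb, hab⟩ h

noncomputable def ancIn (E : V → V → Prop) (S : Finset V) (v : V) : Finset V :=
  {u ∈ S | ReachIn E S u v}

theorem mem_ancIn {S : Finset V} {u v : V} : u ∈ ancIn E S v ↔ u ∈ S ∧ ReachIn E S u v :=
  mem_filter

theorem ancIn_subset (S : Finset V) (v : V) : ancIn E S v ⊆ S :=
  filter_subset _ _

theorem mem_ancIn_self {S : Finset V} {v : V} (hv : v ∈ S) : v ∈ ancIn E S v :=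
  mem_ancIn.2 ⟨hv, .refl⟩

theorem mem_ancIn_of_adj {S : Finset V} {u x v : V} (hu : u ∈ S) (hux : E u x)
    (hx : x ∈ ancIn E S v) : u ∈ ancIn E S v :=
  have hx := mem_ancIn.1 hx
  mem_ancIn.2 ⟨hu, hx.2.head hu hx.1 hux⟩

theorem ancIn_ssubset_ancIn {S : Finset V} {u v : V} (hv : v ∈ S) (huv : ReachIn E S u v)
    (hvu : ¬ ReachIn E S v u) : ancIn E S u ⊂ ancIn E S v := by
  refine Finset.ssubset_iff_subset_ne.2 ⟨fun x hx => ?_, fun h => hvu ?_⟩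
  · have hx := mem_ancIn.1 hx
    exact mem_ancIn.2 ⟨hx.1, hx.2.trans huv⟩
  · exact (mem_ancIn.1 (h ▸ mem_ancIn_self hv)).2

section DecidableEq

variable [DecidableEq V]

theorem mem_sccOf {S : Finset V} {u v : V} :
    u ∈ sccOf E S v ↔ u ∈ S ∧ ReachIn E S v u ∧ ReachIn E S u v :=
  mem_filter

theorem sccOf_mono {S T : Finset V} (hST : S ⊆ T) (v : V) : sccOf E S v ⊆ sccOf E T v := by
  intro u hu
  obtain ⟨hu, hvu, huv⟩ := mem_sccOf.1 hu
  exact mem_sccOf.2 ⟨hST hu, hvu.mono hST, huv.mono hST⟩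

theorem sccOf_ssubset {S : Finset V} (hS : ¬ StronglyConnIn E S) (v : V) :
    sccOf E S v ⊂ S := by
  refine Finset.ssubset_iff_subset_ne.2 ⟨filter_subset _ _, fun h => hS fun a ha b hb => ?_⟩
  rw [← h] at ha hb
  exact (mem_sccOf.1 ha).2.2.trans (mem_sccOf.1 hb).2.1

theorem card_sccOf_le_one {S : Finset V} (hS : AcyclicIn E S) (v : V) : #(sccOf E S v) ≤ 1 := by
  suffices ∀ u ∈ sccOf E S v, u = v from
    card_le_one.2 fun a ha b hb => (this a ha).trans (this b hb).symm
  intro u hu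
  obtain ⟨-, hvu, huv⟩ := mem_sccOf.1 hu
  rcases Relation.ReflTransGen.cases_head hvu with rfl | ⟨x, ⟨hv, hx, hvx⟩, hxu⟩
  · rfl
  · exact (hS ⟨v, hv, x, hx, hvx, hxu.trans huv⟩).elim

theorem exists_ancIn_subset_sccOf {S : Finset V} (hS : S.Nonempty) :
    ∃ v ∈ S, ancIn E S v ⊆ sccOf E S v := by
  obtain ⟨v, hv, hmin⟩ := S.exists_min_image (fun v => #(ancIn E S v)) hS
  refine ⟨v, hv, fun u hu => ?_⟩
  obtain ⟨hu, huv⟩ := mem_ancIn.1 hu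
  refine mem_sccOf.2 ⟨hu, by_contra fun hvu => ?_, huv⟩
  exact (hmin u hu).not_gt (card_lt_card (ancIn_ssubset_ancIn hv huv hvu))

end DecidableEq

/-- A directed path decomposition of `G[S]` of width at most `w` in which vertex `v` lies in
exactly the bags at positions `firstBag v, …, lastBag v`. -/
structure IntervalDecomp (E : V → V → Prop) (S : Finset V) (w : ℕ) where
  firstBag : V → ℕ
  lastBag : V → ℕ
  firstBag_le_lastBag : ∀ v ∈ S, firstBag v ≤ lastBag v
  firstBag_le_lastBag_of_adj : ∀ u ∈ S, ∀ v ∈ S, E u v → firstBag u ≤ lastBag v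
  card_bag_le : ∀ i, #{v ∈ S | firstBag v ≤ i ∧ i ≤ lastBag v} ≤ w + 1

namespace IntervalDecomp

variable {S T : Finset V} {w : ℕ}

def mono (D : IntervalDecomp E S w) (hTS : T ⊆ S) {w' : ℕ} (hw : w ≤ w') :
    IntervalDecomp E T w' where
  firstBag := D.firstBag
  lastBag := D.lastBag
  firstBag_le_lastBag v hv := D.firstBag_le_lastBag v (hTS hv)
  firstBag_le_lastBag_of_adj u hu v hv := D.firstBag_le_lastBag_of_adj u (hTS hu) v (hTS hv)
  card_bag_le i := (card_le_card (filter_subset_filter _ hTS)).trans ((D.card_bag_le i).trans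
    (by omega))

def ofCardLe (h : #S ≤ w + 1) : IntervalDecomp E S w where
  firstBag _ := 0
  lastBag _ := 0
  firstBag_le_lastBag _ _ := le_rfl
  firstBag_le_lastBag_of_adj _ _ _ _ _ := le_rfl
  card_bag_le _ := (card_filter_le _ _).trans h

def bag (D : IntervalDecomp E S w) (i : ℕ) : Finset V :=
  {v ∈ S | D.firstBag v ≤ i ∧ i ≤ D.lastBag v}

theorem mem_bag {D : IntervalDecomp E S w} {i : ℕ} {v : V} :
    v ∈ D.bag i ↔ v ∈ S ∧ D.firstBag v ≤ i ∧ i ≤ D.lastBag v :=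
  mem_filter

def bags [Fintype V] (D : IntervalDecomp E univ w) : List (Finset V) :=
  (List.range ((univ : Finset V).sup D.lastBag + 1)).map D.bag

theorem isDirPathDecomp_bags [Fintype V] (D : IntervalDecomp E univ w) :
    IsDirPathDecomp E D.bags := by
  have hN : ∀ v, D.lastBag v < univ.sup D.lastBag + 1 := fun v =>
    Nat.lt_succ_of_le (le_sup (mem_univ v))
  have hlen : D.bags.length = univ.sup D.lastBag + 1 := by simp [bags]
  have hget : ∀ i (hi : i < D.bags.length) v,
      v ∈ D.bags.get ⟨i, hi⟩ ↔ D.firstBag v ≤ i ∧ i ≤ D.lastBag v := by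
    simp [bags, mem_bag]
  have hfirst : ∀ v, D.firstBag v ≤ D.lastBag v := fun v => D.firstBag_le_lastBag v (mem_univ v)
  have mem_bags : ∀ i ≤ univ.sup D.lastBag, D.bag i ∈ D.bags := fun i hi =>
    List.mem_map.2 ⟨i, List.mem_range.2 (Nat.lt_succ_of_le hi), rfl⟩
  refine ⟨fun v => ?_, fun i j k hij hjk hi hj hk v hvi hvk => ?_, fun u v huv => ?_⟩
  · exact ⟨_, mem_bags _ ((hfirst v).trans (le_sup (mem_univ v))),
      mem_bag.2 ⟨mem_univ v, le_rfl, hfirst v⟩⟩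
  · rw [hget] at hvi hvk ⊢
    omega
  · rcases (D.firstBag_le_lastBag_of_adj u (mem_univ u) v (mem_univ v) huv).lt_or_eq with h | h
    · have := hfirst u
      have := hN v
      exact .inr ⟨D.firstBag u, D.lastBag v, by omega, by omega, h,
        (hget _ _ u).2 ⟨le_rfl, hfirst u⟩, (hget _ _ v).2 ⟨hfirst v, le_rfl⟩⟩
    · refine .inl ⟨_, mem_bags _ ((hfirst u).trans (le_sup (mem_univ u))), ?_, ?_⟩
      · exact mem_bag.2 ⟨mem_univ u, le_rfl, hfirst u⟩
      · exact mem_bag.2 ⟨mem_univ v, h ▸ hfirst v, h.le⟩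

theorem dpw_le [Fintype V] (D : IntervalDecomp E univ w) : dpw E ≤ w := by
  refine Nat.sInf_le ⟨D.bags, D.isDirPathDecomp_bags, fun W hW => ?_⟩
  obtain ⟨i, -, rfl⟩ := List.mem_map.1 hW
  exact D.card_bag_le i

variable [DecidableEq V]

/-- `D₂` is placed after `D₁`, which serves every edge from `S` to `T`. -/
def append (D₁ : IntervalDecomp E S w) (D₂ : IntervalDecomp E T w)
    (hTS : ∀ u ∈ T, ∀ v ∈ S, ¬ E u v) : IntervalDecomp E (S ∪ T) w where
  firstBag v := if v ∈ S then D₁.firstBag v else S.sup D₁.lastBag + 1 + D₂.firstBag v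
  lastBag v := if v ∈ S then D₁.lastBag v else S.sup D₁.lastBag + 1 + D₂.lastBag v
  firstBag_le_lastBag v hv := by
    split_ifs with hvS
    · exact D₁.firstBag_le_lastBag v hvS
    · have := D₂.firstBag_le_lastBag v ((mem_union.1 hv).resolve_left hvS)
      omega
  firstBag_le_lastBag_of_adj u hu v hv huv := by
    by_cases huS : u ∈ S <;> by_cases hvS : v ∈ S <;> simp only [huS, hvS, if_true, if_false]
    · exact D₁.firstBag_le_lastBag_of_adj u huS v hvS huv
    · have := D₁.firstBag_le_lastBag u huS
      have := le_sup (f := D₁.lastBag) huS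
      omega
    · exact (hTS u ((mem_union.1 hu).resolve_left huS) v hvS huv).elim
    · have := D₂.firstBag_le_lastBag_of_adj u ((mem_union.1 hu).resolve_left huS)
        v ((mem_union.1 hv).resolve_left hvS) huv
      omega
  card_bag_le i := by
    by_cases hi : i ≤ S.sup D₁.lastBag
    · refine (card_le_card fun v hv => ?_).trans (D₁.card_bag_le i)
      rw [mem_filter] at hv ⊢
      split_ifs at hv with hvS
      · exact ⟨hvS, hv.2⟩
      · omega
    · refine (card_le_card fun v hv => ?_).trans (D₂.card_bag_le (i - (S.sup D₁.lastBag + 1)))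
      rw [mem_filter] at hv ⊢
      split_ifs at hv with hvS
      · have := le_sup (f := D₁.lastBag) hvS
        omega
      · exact ⟨(mem_union.1 hv.1).resolve_left hvS, by omega, by omega⟩

/-- Adds `a` to every bag, in an interval covering all bags of `D`. -/
def cone (D : IntervalDecomp E T w) (a : V) : IntervalDecomp E (insert a T) (w + 1) where
  firstBag v := if v = a then 0 else D.firstBag v
  lastBag v := if v = a then T.sup D.lastBag else D.lastBag v
  firstBag_le_lastBag v hv := by
    split_ifs with hva
    · exact Nat.zero_le _
    · exact D.firstBag_le_lastBag v ((mem_insert.1 hv).resolve_left hva)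
  firstBag_le_lastBag_of_adj u hu v hv huv := by
    by_cases hua : u = a <;> by_cases hva : v = a <;> simp only [hua, hva, if_true, if_false]
    · exact Nat.zero_le _
    · exact Nat.zero_le _
    · have huT := (mem_insert.1 hu).resolve_left hua
      exact (D.firstBag_le_lastBag u huT).trans (le_sup huT)
    · exact D.firstBag_le_lastBag_of_adj u ((mem_insert.1 hu).resolve_left hua)
        v ((mem_insert.1 hv).resolve_left hva) huv
  card_bag_le i := by
    refine (card_le_card fun v hv => ?_).trans ((card_insert_le a _).trans
      (Nat.succ_le_succ (D.card_bag_le i)))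
    rw [mem_filter] at hv
    rw [mem_insert, mem_filter]
    split_ifs at hv with hva
    · exact .inl hva
    · exact .inr ⟨(mem_insert.1 hv.1).resolve_left hva, hv.2⟩

theorem nonempty_of_sccOf (h : ∀ v ∈ S, Nonempty (IntervalDecomp E (sccOf E S v) w)) :
    Nonempty (IntervalDecomp E S w) := by
  induction S using Finset.strongInduction with
  | H S ih =>
    rcases S.eq_empty_or_nonempty with rfl | hS
    · exact ⟨ofCardLe (by simp)⟩
    obtain ⟨v, hv, hsource⟩ := exists_ancIn_subset_sccOf (E := E) hS
    have hrest : S \ ancIn E S v ⊂ S := sdiff_ssubset (ancIn_subset S v) ⟨v, mem_ancIn_self hv⟩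
    obtain ⟨D₁⟩ := h v hv
    obtain ⟨D₂⟩ := ih _ hrest fun u hu =>
      (h u (mem_sdiff.1 hu).1).map fun D => D.mono (sccOf_mono hrest.subset u) le_rfl
    have hno_entry : ∀ u ∈ S \ ancIn E S v, ∀ x ∈ ancIn E S v, ¬ E u x := fun u hu x hx hux =>
      (mem_sdiff.1 hu).2 (mem_ancIn_of_adj (mem_sdiff.1 hu).1 hux hx)
    exact ⟨((D₁.mono hsource le_rfl).append D₂ hno_entry).mono
      (union_sdiff_of_subset (ancIn_subset S v)).ge le_rfl⟩

theorem nonempty_crankAux_of_card_le (E : V → V → Prop) :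
    ∀ (n : ℕ) (S : Finset V), #S ≤ n → Nonempty (IntervalDecomp E S (crankAux E n S))
  | 0, S, hS => ⟨ofCardLe (by omega)⟩
  | n + 1, S, hS => by
    rw [crankAux]
    split_ifs with hA hSC
    · exact nonempty_of_sccOf fun v _ => ⟨ofCardLe (card_sccOf_le_one hA v)⟩
    · obtain ⟨a, ha, -⟩ := not_not.1 hA
      obtain ⟨v, hv, hmin⟩ := Nat.sInf_mem (s := {m | ∃ v ∈ S, crankAux E n (S.erase v) = m})
        ⟨_, a, ha, rfl⟩
      obtain ⟨D⟩ := nonempty_crankAux_of_card_le E n (S.erase v)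
        (by rw [card_erase_of_mem hv]; omega)
      rw [← hmin, add_comm]
      exact ⟨(D.cone v).mono (insert_erase hv).ge le_rfl⟩
    · refine nonempty_of_sccOf fun v hv => ?_
      obtain ⟨D⟩ := nonempty_crankAux_of_card_le E n (sccOf E S v)
        (Nat.le_of_lt_succ ((card_lt_card (sccOf_ssubset hSC v)).trans_le hS))
      exact ⟨D.mono subset_rfl (le_sup (f := fun v => crankAux E n (sccOf E S v)) hv)⟩

end IntervalDecomp

/-- For every digraph `G`, `dpw(G) ≤ crank(G)`. -/
theorem dpw_le_crank {V : Type*} [DecidableEq V] [Fintype V] (E : V → V → Prop) :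
    dpw E ≤ crank E :=
  let ⟨D⟩ := IntervalDecomp.nonempty_crankAux_of_card_le E (Fintype.card V) univ card_univ.le
  D.dpw_le
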